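/- arXiv:2303.09976 — 2 statements merged into one kernel-verified Lean document; each statement's English description precedes it below -/
import Mathlib

section
/- For every Euclidean-spacelike unit vector ξ ∈ ℝ^d (i.e. |ξ₀| < ‖ξ_r‖, ‖ξ‖ = 1 for the Euclidean norm), there exists a Minkowski-spacelike vector y_ξ ∈ ℝ^d with ⟨y_ξ, ξ⟩ = 1 (Euclidean inner product) such that for all v ⊥ ξ (Euclidean orthogonality) and all λ ∈ ℝ: γ(λ y_ξ + v) = γ(λ y_ξ - v), where γ(x) = x₀² - Σ_{i≥1} xᵢ². -/
/-!
With `η = (1, -1, …, -1)` acting by coordinatewise multiplication, `γ(x) = ⟨η x, x⟩` and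
`γ(a + b) - γ(a - b) = 4 ⟨η a, b⟩`. Take `y = γ(ξ)⁻¹ η ξ`, which makes sense because `γ(ξ) < 0`.
As `η² = 1`, we get `⟨η y, v⟩ = γ(ξ)⁻¹ ⟨ξ, v⟩ = 0` for `v ⊥ ξ`, while `⟨y, ξ⟩ = γ(ξ)⁻¹ γ(ξ) = 1`
and `γ(y) = γ(ξ)⁻² γ(η ξ) = γ(ξ)⁻¹ < 0`.
-/

/-- The Minkowski quadratic form `γ(x) = x₀² - Σ_{i≠0} xᵢ²` on `ℝ^d`. -/
def minkGamma {d : ℕ} [NeZero d] (x : Fin d → ℝ) : ℝ :=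
  (x 0) ^ 2 - ∑ i ∈ Finset.univ.filter (fun i : Fin d => i ≠ 0), (x i) ^ 2

/-- The Euclidean inner product on `ℝ^d`. -/
def eucInner {d : ℕ} (x y : Fin d → ℝ) : ℝ := ∑ i, x i * y i

open Matrix

section Minkowski

variable {d : ℕ} [NeZero d]

def minkSign : Fin d → ℝ := fun i => if i = 0 then 1 else -1

lemma minkSign_mul_minkSign_mul (x : Fin d → ℝ) : minkSign * (minkSign * x) = x := by
  ext i
  by_cases hi : i = 0 <;> simp [minkSign, hi]

lemma minkSign_mul_dotProduct_comm (x y : Fin d → ℝ) :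
    (minkSign * x) ⬝ᵥ y = (minkSign * y) ⬝ᵥ x := by
  simp only [dotProduct, Pi.mul_apply]
  exact Finset.sum_congr rfl fun i _ => by ring

lemma minkGamma_eq_dotProduct (x : Fin d → ℝ) : minkGamma x = (minkSign * x) ⬝ᵥ x := by
  rw [minkGamma, dotProduct, Finset.filter_ne',
    ← Finset.add_sum_erase Finset.univ _ (Finset.mem_univ 0), sub_eq_add_neg,
    ← Finset.sum_neg_distrib]
  refine congrArg₂ (· + ·) (by simp [minkSign, sq]) (Finset.sum_congr rfl fun i hi => ?_)
  simp [minkSign, Finset.ne_of_mem_erase hi, sq]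

lemma minkGamma_add_sub_minkGamma_sub (x y : Fin d → ℝ) :
    minkGamma (x + y) - minkGamma (x - y) = 4 * ((minkSign * x) ⬝ᵥ y) := by
  simp only [minkGamma_eq_dotProduct, mul_add, mul_sub, add_dotProduct, dotProduct_add,
    sub_dotProduct, dotProduct_sub, minkSign_mul_dotProduct_comm y x]
  ring

lemma minkGamma_smul (c : ℝ) (x : Fin d → ℝ) : minkGamma (c • x) = c ^ 2 * minkGamma x := by
  simp only [minkGamma_eq_dotProduct, mul_smul_comm, smul_dotProduct, dotProduct_smul,
    smul_eq_mul]
  ring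

lemma minkGamma_minkSign_mul (x : Fin d → ℝ) : minkGamma (minkSign * x) = minkGamma x := by
  rw [minkGamma_eq_dotProduct, minkSign_mul_minkSign_mul, dotProduct_comm,
    minkGamma_eq_dotProduct]

end Minkowski

theorem exists_reflection_vector_general {d : ℕ} [NeZero d] (ξ : Fin d → ℝ)
    (hsp : (ξ 0) ^ 2 < ∑ i ∈ Finset.univ.filter (fun i : Fin d => i ≠ 0), (ξ i) ^ 2) :
    ∃ y : Fin d → ℝ, minkGamma y < 0 ∧ eucInner y ξ = 1 ∧
      ∀ v : Fin d → ℝ, eucInner v ξ = 0 →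
        ∀ l : ℝ, minkGamma (l • y + v) = minkGamma (l • y - v) := by
  have hξ : minkGamma ξ < 0 := sub_neg.mpr hsp
  refine ⟨(minkGamma ξ)⁻¹ • (minkSign * ξ), ?_, ?_, fun v hv l => ?_⟩
  · rw [minkGamma_smul, minkGamma_minkSign_mul, sq, mul_assoc, inv_mul_cancel₀ hξ.ne, mul_one]
    exact inv_lt_zero.mpr hξ
  · change _ ⬝ᵥ ξ = 1
    rw [smul_dotProduct, ← minkGamma_eq_dotProduct, smul_eq_mul, inv_mul_cancel₀ hξ.ne]
  · change v ⬝ᵥ ξ = 0 at hv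
    rw [← sub_eq_zero, minkGamma_add_sub_minkGamma_sub, mul_smul_comm, mul_smul_comm,
      minkSign_mul_minkSign_mul, smul_dotProduct, smul_dotProduct, dotProduct_comm, hv]
    simp

/-- For every Euclidean-spacelike unit vector `ξ` (i.e. `ξ₀² < ‖ξ_r‖²`, `‖ξ‖ = 1`
for the Euclidean norm), there is a Minkowski-spacelike vector `y_ξ` with
`⟨y_ξ, ξ⟩ = 1` such that `γ(λ y_ξ + v) = γ(λ y_ξ - v)` for all `v ⊥ ξ` and `λ ∈ ℝ`. -/
theorem exists_reflection_vector {d : ℕ} [NeZero d] (ξ : Fin d → ℝ)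
    (hunit : ∑ i, (ξ i) ^ 2 = 1)
    (hsp : (ξ 0) ^ 2 < ∑ i ∈ Finset.univ.filter (fun i : Fin d => i ≠ 0), (ξ i) ^ 2) :
    ∃ y : Fin d → ℝ, minkGamma y < 0 ∧ eucInner y ξ = 1 ∧
      ∀ v : Fin d → ℝ, eucInner v ξ = 0 →
        ∀ l : ℝ, minkGamma (l • y + v) = minkGamma (l • y - v) :=
  exists_reflection_vector_general ξ hsp
end

section
/- Let ξ ∈ ℝ^d be spacelike (γ(ξ) < 0 where γ(x) = x₀² - ‖x_r‖²) and let y_ξ be a vector with ⟨y_ξ,ξ⟩ = 1 and γ(λy_ξ + v) = γ(λy_ξ - v) for all λ ∈ ℝ and all v Euclidean-orthogonal to ξ. Define O_ξ(x) := 2⟨x,ξ⟩ y_ξ - x. Then O_ξ is a Lorentz transformation: γ(O_ξ(x)) = γ(x) for all x ∈ ℝ^d. -/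
/-- Let `ξ` be spacelike (`γ(ξ) < 0`) and `y_ξ` satisfy `⟨y_ξ,ξ⟩ = 1` and the
reflection symmetry `γ(λ y_ξ + v) = γ(λ y_ξ - v)` for all `λ ∈ ℝ` and `v ⊥ ξ`.
Then `O_ξ(x) := 2⟨x,ξ⟩ y_ξ - x` is a Lorentz transformation: `γ(O_ξ x) = γ(x)`. -/
theorem reflection_is_lorentz {d : ℕ} [NeZero d] (ξ y : Fin d → ℝ)
    (hsp : minkGamma ξ < 0) (hyξ : eucInner y ξ = 1)
    (hsym : ∀ v : Fin d → ℝ, eucInner v ξ = 0 →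
      ∀ l : ℝ, minkGamma (l • y + v) = minkGamma (l • y - v)) :
    ∀ x : Fin d → ℝ, minkGamma ((2 * eucInner x ξ) • y - x) = minkGamma x := by
  intro x
  set c := eucInner x ξ with hc
  have hv : eucInner (x - c • y) ξ = 0 := by
    have : eucInner (x - c • y) ξ = eucInner x ξ - c * eucInner y ξ := by
      simp [eucInner, sub_mul, Finset.sum_sub_distrib, Finset.mul_sum, mul_assoc]
    rw [this, hyξ, ← hc]
    ring
  have h := hsym (x - c • y) hv c
  have e1 : c • y + (x - c • y) = x := by module
  have e2 : c • y - (x - c • y) = (2 * c) • y - x := by module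
  rw [e1, e2] at h
  exact h.symm
end
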